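/- arXiv:0812.4667 — 6 statements merged into one kernel-verified Lean document; each statement's English description precedes it below -/
import Mathlib

section
/- Let n and m be natural numbers and let E and N be finite sets of triples (i,j,k) with i,j,k ∈ Fin n. Suppose there exists a tuple α : Fin n → ℝ such that α i + α j = α k for every (i,j,k) ∈ E and α i + α j > α k for every (i,j,k) ∈ N. Then there exists a tuple β : Fin n → ℤ such that (β i) + (β j) = β k for every (i,j,k) ∈ E and (β i) + (β j) > β k for every (i,j,k) ∈ N. -/
/-!
Expand the `α i` in a Hamel basis of `ℝ` over `ℚ`; only finitely many basis vectors occur.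
Replacing these by nearby rationals yields a `ℚ`-linear map `f : ℝ → ℚ` with `f ∘ α` as close
to `α` as we like. Being additive, `f ∘ α` still satisfies the equations, and being close to `α`
it satisfies the strict inequalities, which define an open set. Clearing denominators then
gives an integer solution.
-/

open Module

theorem mem_closure_range_ratLinearMap_comp {ι : Type*} [Fintype ι] (α : ι → ℝ) :
    α ∈ closure (Set.range fun (f : ℝ →ₗ[ℚ] ℚ) i => (f (α i) : ℝ)) := by
  classical
  let B := Basis.ofVectorSpace ℚ ℝ
  let S := Finset.univ.biUnion fun i => (B.repr (α i)).support
  let Φ : (Basis.ofVectorSpaceIndex ℚ ℝ → ℝ) → ι → ℝ :=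
    fun c i => ∑ l ∈ S, (B.repr (α i) l : ℝ) * c l
  have hΦ : Continuous Φ := by fun_prop
  have hB : Φ (fun l => B l) = α := by
    ext i
    conv_rhs => rw [← B.linearCombination_repr (α i)]
    rw [Finsupp.linearCombination_apply, Finsupp.sum_of_support_subset _
      (Finset.subset_biUnion_of_mem (fun i => (B.repr (α i)).support) (Finset.mem_univ i))
      (fun l a => a • B l) (fun _ _ => zero_smul ℚ _)]
    simp [Φ, S, Rat.smul_def]
  have hdense : DenseRange fun (r : Basis.ofVectorSpaceIndex ℚ ℝ → ℚ) l => (r l : ℝ) :=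
    DenseRange.piMap fun _ => Rat.denseRange_cast
  have hα : α ∈ closure (Φ '' Set.range fun (r : _ → ℚ) l => (r l : ℝ)) :=
    hB ▸ hΦ.range_subset_closure_image_dense hdense ⟨_, rfl⟩
  refine closure_mono ?_ hα
  rintro _ ⟨_, ⟨r, rfl⟩, rfl⟩
  exact ⟨∑ l ∈ S, r l • B.coord l, by ext i; simp [Φ, mul_comm]⟩

def IsSumSolution {ι R : Type*} [Add R] [LT R] (E N : Finset (ι × ι × ι)) (x : ι → R) : Prop :=
  (∀ t ∈ E, x t.1 + x t.2.1 = x t.2.2) ∧ ∀ t ∈ N, x t.1 + x t.2.1 > x t.2.2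

theorem IsSumSolution.comp_strictMono_iff {ι R S : Type*} [AddZeroClass R] [LinearOrder R]
    [AddZeroClass S] [Preorder S] {E N : Finset (ι × ι × ι)} {x : ι → R} (φ : R →+ S)
    (hφ : StrictMono φ) : IsSumSolution E N (φ ∘ x) ↔ IsSumSolution E N x := by
  simp only [IsSumSolution, Function.comp_apply, ← map_add, hφ.injective.eq_iff, gt_iff_lt,
    hφ.lt_iff_lt]

theorem exists_pos_nat_mul_rat_eq_int {ι : Type*} [Fintype ι] (γ : ι → ℚ) :
    ∃ D : ℕ, 0 < D ∧ ∀ i, ∃ z : ℤ, (z : ℚ) = D * γ i := by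
  refine ⟨∏ i, (γ i).den, Finset.prod_pos fun i _ => (γ i).pos, fun i => ?_⟩
  obtain ⟨c, hc⟩ := Finset.dvd_prod_of_mem (fun i => (γ i).den) (Finset.mem_univ i)
  refine ⟨c * (γ i).num, ?_⟩
  rw [hc, Nat.cast_mul, mul_comm ((γ i).den : ℚ), mul_assoc, Rat.den_mul_eq_num]
  push_cast
  rfl

theorem IsSumSolution.exists_int {ι : Type*} [Fintype ι] {E N : Finset (ι × ι × ι)}
    {γ : ι → ℚ} (hγ : IsSumSolution E N γ) : ∃ β : ι → ℤ, IsSumSolution E N β := by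
  obtain ⟨D, hD, hint⟩ := exists_pos_nat_mul_rat_eq_int γ
  choose β hβ using hint
  have hscaled := (IsSumSolution.comp_strictMono_iff (AddMonoidHom.mulLeft (D : ℚ))
    (strictMono_mul_left_of_pos (by exact_mod_cast hD))).2 hγ
  refine ⟨β, (IsSumSolution.comp_strictMono_iff (Int.castAddHom ℚ) Int.cast_strictMono).1 ?_⟩
  convert hscaled using 1
  exact funext hβ

theorem diag_contraction_integer_signature_core_general
    (n : ℕ)
    (E N : Finset (Fin n × Fin n × Fin n))
    (α : Fin n → ℝ)
    (hE : ∀ t ∈ E, α t.1 + α t.2.1 = α t.2.2)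
    (hN : ∀ t ∈ N, α t.1 + α t.2.1 > α t.2.2) :
    ∃ β : Fin n → ℤ,
      (∀ t ∈ E, β t.1 + β t.2.1 = β t.2.2) ∧
      (∀ t ∈ N, β t.1 + β t.2.1 > β t.2.2) := by
  have hU : IsOpen {x : Fin n → ℝ | ∀ t ∈ N, x t.1 + x t.2.1 > x t.2.2} := by
    simpa only [Set.ofPred_forall] using
      isOpen_biInter_finset fun t _ => isOpen_lt (by fun_prop) (by fun_prop)
  obtain ⟨_, hfN, f, rfl⟩ := mem_closure_iff.1 (mem_closure_range_ratLinearMap_comp α) _ hU hN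
  have hf : IsSumSolution E N (f ∘ α) := by
    refine ⟨fun t ht => by simp only [Function.comp_apply, ← map_add, hE t ht], fun t ht => ?_⟩
    have h := hfN t ht
    dsimp only at h
    exact_mod_cast h
  exact hf.exists_int

/-- A mixed system of homogeneous linear equations `x_i + x_j = x_k` and strict
homogeneous inequalities `x_i + x_j > x_k` that has a real solution also has an
integer solution. -/
theorem diag_contraction_integer_signature_core
    (n m : ℕ)
    (E N : Finset (Fin n × Fin n × Fin n))
    (α : Fin n → ℝ)
    (hE : ∀ t ∈ E, α t.1 + α t.2.1 = α t.2.2)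
    (hN : ∀ t ∈ N, α t.1 + α t.2.1 > α t.2.2) :
    ∃ β : Fin n → ℤ,
      (∀ t ∈ E, β t.1 + β t.2.1 = β t.2.2) ∧
      (∀ t ∈ N, β t.1 + β t.2.1 > β t.2.2) :=
  diag_contraction_integer_signature_core_general n E N α hE hN
end

section
/- Let c : Fin n → Fin n → Fin n → ℝ be the structure constants of an n-dimensional real Lie algebra, let α : Fin n → ℝ, and let c₀ : Fin n → Fin n → Fin n → ℝ be such that for all i, j, k the function ε ↦ c i j k * ε ^ (α i + α j - α k) (real power, ε > 0) tends to c₀ i j k as ε → 0⁺ (i.e., along the filter nhdsWithin 0 (Set.Ioi (0:ℝ))). Then there exists β : Fin n → ℤ such that for all i, j, k the function ε ↦ c i j k * ε ^ (β i + β j - β k) (integer power, ε > 0) tends to c₀ i j k as ε → 0⁺. -/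
/-!
The contracted constants depend on the signature only through the signs of the exponents
`α i + α j - α k`: a nonzero `c i j k` forces a nonnegative exponent, and the limit is then
`c i j k` or `0` according as the exponent vanishes or is positive. It therefore suffices to find
integers with the same sign pattern. Composing `α` with a `ℚ`-linear map `f : ℝ → ℚ` preserves
every rational linear relation, and taking `f` close to the identity on the finitely many
exponents (by approximating a Hamel basis of `ℝ` over `ℚ` by rationals) preserves their signs;
clearing denominators then gives integers.
-/

open Filter Topology

theorem exists_seq_linearMap_rat_tendsto :
    ∃ f : ℕ → ℝ →ₗ[ℚ] ℚ, ∀ x, Tendsto (fun N => (f N x : ℝ)) atTop (𝓝 x) := by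
  choose u _ _ hu using Real.exists_seq_rat_strictMono_tendsto
  have b := Module.Basis.ofVectorSpace ℚ ℝ
  refine ⟨fun N => b.constr ℚ fun r => u (b r) N, fun x => ?_⟩
  have hx : x = ∑ r ∈ (b.repr x).support, (b.repr x r : ℝ) * b r := by
    simpa [Finsupp.linearCombination_apply, Finsupp.sum, Rat.smul_def] using
      (b.linearCombination_repr x).symm
  simp only [Module.Basis.constr_apply, Finsupp.sum, smul_eq_mul, Rat.cast_sum, Rat.cast_mul]
  conv_rhs => rw [hx]
  exact tendsto_finsetSum _ fun r _ => (hu (b r)).const_mul _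

theorem exists_linearMap_rat_sign_eq {ι : Type*} [Finite ι] (x : ι → ℝ) :
    ∃ f : ℝ →ₗ[ℚ] ℚ, ∀ i, SignType.sign (f (x i) : ℝ) = SignType.sign (x i) := by
  obtain ⟨f, hf⟩ := exists_seq_linearMap_rat_tendsto
  have h : ∀ i, ∀ᶠ N in atTop, SignType.sign (f N (x i) : ℝ) = SignType.sign (x i) := by
    intro i
    rcases lt_trichotomy (x i) 0 with hneg | hzero | hpos
    · filter_upwards [(hf (x i)).eventually (gt_mem_nhds hneg)] with N hN
      rw [sign_neg hN, sign_neg hneg]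
    · simp [hzero]
    · filter_upwards [(hf (x i)).eventually (lt_mem_nhds hpos)] with N hN
      rw [sign_pos hN, sign_pos hpos]
  obtain ⟨N, hN⟩ := (eventually_all.2 h).exists
  exact ⟨f N, hN⟩

theorem exists_pos_nat_mul_eq_intCast {ι : Type*} [Fintype ι] (q : ι → ℚ) :
    ∃ D : ℕ, 0 < D ∧ ∃ z : ι → ℤ, ∀ i, (z i : ℚ) = D * q i := by
  have hdvd : ∀ i, ∃ e : ℕ, ∏ j, (q j).den = (q i).den * e :=
    fun i => Finset.dvd_prod_of_mem _ (Finset.mem_univ i)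
  choose e he using hdvd
  refine ⟨∏ j, (q j).den, Finset.prod_pos fun j _ => (q j).den_pos,
    fun i => (q i).num * e i, fun i => ?_⟩
  rw [he i]
  push_cast
  rw [← Rat.den_mul_eq_num]
  ring

theorem exists_int_sign_eq_of_real {ι : Type*} [Fintype ι] (α : ι → ℝ) :
    ∃ β : ι → ℤ, ∀ i j k,
      SignType.sign ((β i + β j - β k : ℤ) : ℝ) = SignType.sign (α i + α j - α k) := by
  obtain ⟨f, hf⟩ := exists_linearMap_rat_sign_eq fun p : ι × ι × ι => α p.1 + α p.2.1 - α p.2.2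
  obtain ⟨D, hD, β, hβ⟩ := exists_pos_nat_mul_eq_intCast fun i => f (α i)
  refine ⟨β, fun i j k => ?_⟩
  have hcast : ((β i + β j - β k : ℤ) : ℝ) = D * (f (α i + α j - α k) : ℝ) := by
    have hq : ((β i + β j - β k : ℤ) : ℚ) = D * f (α i + α j - α k) := by
      push_cast [hβ, map_add, map_sub]
      ring
    exact_mod_cast hq
  rw [hcast, sign_mul, sign_pos (by exact_mod_cast hD : (0 : ℝ) < D), one_mul]
  exact hf (i, j, k)

theorem exponent_nonneg_of_tendsto_mul_rpow {c L s : ℝ} (hc : c ≠ 0)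
    (h : Tendsto (fun ε : ℝ => c * ε ^ s) (𝓝[>] 0) (𝓝 L)) : 0 ≤ s := by
  by_contra! hs
  have hblowup : Tendsto (fun ε : ℝ => |c * ε ^ s|) (𝓝[>] 0) atTop := by
    refine ((tendsto_rpow_neg_nhdsGT_zero hs).const_mul_atTop (abs_pos.2 hc)).congr' ?_
    filter_upwards [self_mem_nhdsWithin] with ε (hε : 0 < ε)
    rw [abs_mul, abs_of_pos (Real.rpow_pos_of_pos hε s)]
  exact not_tendsto_nhds_of_tendsto_atTop hblowup _ h.abs

theorem tendsto_rpow_nhdsGT_zero_of_pos {s : ℝ} (hs : 0 < s) :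
    Tendsto (fun ε : ℝ => ε ^ s) (𝓝[>] 0) (𝓝 0) := by
  simpa [Real.zero_rpow hs.ne'] using
    (Real.continuousAt_rpow_const 0 s (Or.inr hs.le)).tendsto.mono_left nhdsWithin_le_nhds

theorem tendsto_mul_rpow_of_sign_eq {c L s t : ℝ} (hst : SignType.sign t = SignType.sign s)
    (h : Tendsto (fun ε : ℝ => c * ε ^ s) (𝓝[>] 0) (𝓝 L)) :
    Tendsto (fun ε : ℝ => c * ε ^ t) (𝓝[>] 0) (𝓝 L) := by
  rcases eq_or_ne c 0 with rfl | hc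
  · simpa using h
  rcases (exponent_nonneg_of_tendsto_mul_rpow hc h).eq_or_lt with rfl | hs
  · rw [sign_zero, sign_eq_zero_iff] at hst
    simpa [hst] using h
  · have ht : 0 < t := by rwa [sign_pos hs, sign_eq_one_iff] at hst
    have hL : L = 0 := by
      simpa using tendsto_nhds_unique h ((tendsto_rpow_nhdsGT_zero_of_pos hs).const_mul c)
    simpa [hL] using (tendsto_rpow_nhdsGT_zero_of_pos ht).const_mul c

theorem genIW_contraction_integer_signature_general
    (n : ℕ) (c c₀ : Fin n → Fin n → Fin n → ℝ)
    (α : Fin n → ℝ)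
    (hlim : ∀ i j k, Tendsto (fun ε : ℝ => c i j k * ε ^ (α i + α j - α k))
      (𝓝[>] (0 : ℝ)) (𝓝 (c₀ i j k))) :
    ∃ β : Fin n → ℤ, ∀ i j k,
      Tendsto (fun ε : ℝ => c i j k * ε ^ (β i + β j - β k))
        (𝓝[>] (0 : ℝ)) (𝓝 (c₀ i j k)) := by
  obtain ⟨β, hβ⟩ := exists_int_sign_eq_of_real α
  refine ⟨β, fun i j k => ?_⟩
  simpa only [Real.rpow_intCast] using tendsto_mul_rpow_of_sign_eq (hβ i j k) (hlim i j k)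

/-- Any generalized Inönü–Wigner contraction (with real exponents `α`) is equivalent
to a generalized IW-contraction with an integer signature `β`. -/
theorem genIW_contraction_integer_signature
    (n : ℕ) (c c₀ : Fin n → Fin n → Fin n → ℝ)
    (hanti : ∀ i j k, c i j k = -(c j i k))
    (hjac : ∀ i j k m, ∑ l, (c i j l * c l k m + c k i l * c l j m + c j k l * c l i m) = 0)
    (α : Fin n → ℝ)
    (hlim : ∀ i j k, Tendsto (fun ε : ℝ => c i j k * ε ^ (α i + α j - α k))
      (𝓝[>] (0 : ℝ)) (𝓝 (c₀ i j k))) :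
    ∃ β : Fin n → ℤ, ∀ i j k,
      Tendsto (fun ε : ℝ => c i j k * ε ^ (β i + β j - β k))
        (𝓝[>] (0 : ℝ)) (𝓝 (c₀ i j k)) :=
  genIW_contraction_integer_signature_general n c c₀ α hlim
end

section
/- Let c : Fin n → Fin n → Fin n → ℝ be the structure constants of an n-dimensional real Lie algebra. Let Û, Ǔ : ℝ → Matrix (Fin n) (Fin n) ℝ be continuous on (0,1] with Û ε and Ǔ ε invertible for every ε ∈ (0,1], and suppose Ǔ ε tends entrywise to an invertible matrix Ǔ₀ as ε → 0⁺. If the transformed structure constants of c under the matrix U ε := (Û ε) * (Ǔ ε) tend to c₀ componentwise as ε → 0⁺, then the transformed structure constants of c under the matrix ε ↦ (Û ε) * Ǔ₀ also tend to c₀ componentwise as ε → 0⁺. -/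
/-!
The transform `U ↦ U·c` is a right action (`(U * V)·c = V·(U·c)`), so once `Ǔ ε` is invertible,
`(Û ε * Ǔ₀)·c = (Ǔ ε⁻¹ * Ǔ₀)·((Û ε * Ǔ ε)·c)`. The correction `Ǔ ε⁻¹ * Ǔ₀` tends to `1`, and the
action is jointly continuous at invertible matrices, so the limit is `1·c₀ = c₀`.
-/

open Filter Topology

/-- The transformed structure constants of `c` under an invertible matrix `U`:
`(U·c) i' j' k' = ∑ i j k, U i i' * U j j' * (U⁻¹) k' k * c i j k`. -/
noncomputable def transformedSC {n : ℕ} (U : Matrix (Fin n) (Fin n) ℝ)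
    (c : Fin n → Fin n → Fin n → ℝ) : Fin n → Fin n → Fin n → ℝ :=
  fun i' j' k' => ∑ i, ∑ j, ∑ k, U i i' * U j j' * U⁻¹ k' k * c i j k

lemma transformedSC_mul {n : ℕ} (U V : Matrix (Fin n) (Fin n) ℝ)
    (c : Fin n → Fin n → Fin n → ℝ) :
    transformedSC (U * V) c = transformedSC V (transformedSC U c) := by
  ext i' j' k'
  simp only [transformedSC, Matrix.mul_apply, Matrix.mul_inv_rev, Finset.sum_mul,
    Finset.mul_sum, ← Fintype.sum_prod_type']
  refine Fintype.sum_equiv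
    { toFun := fun ⟨i, j, k, m, b, a⟩ => (a, b, m, i, j, k)
      invFun := fun ⟨a, b, m, i, j, k⟩ => (i, j, k, m, b, a)
      left_inv := fun _ => rfl
      right_inv := fun _ => rfl } _ _ fun _ => ?_
  simp only [Equiv.coe_fn_mk]
  ring

lemma transformedSC_one {n : ℕ} (c : Fin n → Fin n → Fin n → ℝ) : transformedSC 1 c = c := by
  ext i' j' k'
  simp [transformedSC, Matrix.one_apply]

lemma Filter.Tendsto.matrix_inv {α m 𝕜 : Type*} [Fintype m] [DecidableEq m] [NormedField 𝕜]
    [CompleteSpace 𝕜] {l : Filter α} {V : α → Matrix m m 𝕜} {V₀ : Matrix m m 𝕜}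
    (hV : Tendsto V l (𝓝 V₀)) (hV₀ : IsUnit V₀.det) :
    Tendsto (fun x => (V x)⁻¹) l (𝓝 V₀⁻¹) :=
  (continuousAt_matrix_inv V₀ (NormedRing.inverse_continuousAt hV₀.unit)).tendsto.comp hV

lemma Filter.Tendsto.transformedSC {α : Type*} {l : Filter α} {n : ℕ}
    {V : α → Matrix (Fin n) (Fin n) ℝ} {V₀ : Matrix (Fin n) (Fin n) ℝ}
    {c : α → Fin n → Fin n → Fin n → ℝ} {c₀ : Fin n → Fin n → Fin n → ℝ}
    (hV : Tendsto V l (𝓝 V₀)) (hV₀ : IsUnit V₀.det) (hc : Tendsto c l (𝓝 c₀)) :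
    Tendsto (fun x => transformedSC (V x) (c x)) l (𝓝 (transformedSC V₀ c₀)) := by
  refine tendsto_pi_nhds.2 fun i' => tendsto_pi_nhds.2 fun j' => tendsto_pi_nhds.2 fun k' => ?_
  refine tendsto_finsetSum _ fun i _ => tendsto_finsetSum _ fun j _ =>
    tendsto_finsetSum _ fun k _ => ?_
  have entry {M : α → Matrix (Fin n) (Fin n) ℝ} {M₀} (h : Tendsto M l (𝓝 M₀)) (a b) :
      Tendsto (fun x => M x a b) l (𝓝 (M₀ a b)) :=
    tendsto_pi_nhds.1 (tendsto_pi_nhds.1 h a) b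
  exact (((entry hV i i').mul (entry hV j j')).mul (entry (hV.matrix_inv hV₀) k' k)).mul
    (tendsto_pi_nhds.1 (tendsto_pi_nhds.1 (tendsto_pi_nhds.1 hc i) j) k)

theorem contraction_matrix_factor_limit_general
    (n : ℕ) (c c₀ : Fin n → Fin n → Fin n → ℝ)
    (Uhat Ucheck : ℝ → Matrix (Fin n) (Fin n) ℝ)
    (Ucheck₀ : Matrix (Fin n) (Fin n) ℝ)
    (hUcheckLim : ∀ i j, Tendsto (fun ε : ℝ => Ucheck ε i j) (𝓝[>] (0 : ℝ)) (𝓝 (Ucheck₀ i j)))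
    (hUcheck₀Inv : IsUnit Ucheck₀)
    (hlim : ∀ i' j' k', Tendsto (fun ε : ℝ => transformedSC (Uhat ε * Ucheck ε) c i' j' k')
      (𝓝[>] (0 : ℝ)) (𝓝 (c₀ i' j' k'))) :
    ∀ i' j' k', Tendsto (fun ε : ℝ => transformedSC (Uhat ε * Ucheck₀) c i' j' k')
      (𝓝[>] (0 : ℝ)) (𝓝 (c₀ i' j' k')) := by
  have hdet₀ : IsUnit Ucheck₀.det := (Matrix.isUnit_iff_isUnit_det _).1 hUcheck₀Inv
  have hUcheck : Tendsto Ucheck (𝓝[>] 0) (𝓝 Ucheck₀) :=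
    tendsto_pi_nhds.2 fun i => tendsto_pi_nhds.2 (hUcheckLim i)
  have hc : Tendsto (fun ε => transformedSC (Uhat ε * Ucheck ε) c) (𝓝[>] 0) (𝓝 c₀) :=
    tendsto_pi_nhds.2 fun i => tendsto_pi_nhds.2 fun j => tendsto_pi_nhds.2 (hlim i j)
  have hcorr : Tendsto (fun ε => (Ucheck ε)⁻¹ * Ucheck₀) (𝓝[>] 0) (𝓝 1) := by
    simpa [Matrix.nonsing_inv_mul _ hdet₀] using
      (hUcheck.matrix_inv hdet₀).mul_const Ucheck₀
  have hdet : ∀ᶠ ε in 𝓝[>] 0, IsUnit (Ucheck ε).det :=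
    (((continuous_id.matrix_det.tendsto _).comp hUcheck).eventually_ne hdet₀.ne_zero).mono
      fun _ h => h.isUnit
  have hfactor : ∀ᶠ ε in 𝓝[>] 0, transformedSC (Uhat ε * Ucheck₀) c =
      transformedSC ((Ucheck ε)⁻¹ * Ucheck₀) (transformedSC (Uhat ε * Ucheck ε) c) :=
    hdet.mono fun ε h => by
      rw [← transformedSC_mul, mul_assoc, Matrix.mul_nonsing_inv_cancel_left _ _ h]
  have key := (hcorr.transformedSC (by simp) hc).congr' (hfactor.mono fun _ h => h.symm)
  rw [transformedSC_one] at key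
  exact fun i' j' k' =>
    tendsto_pi_nhds.1 (tendsto_pi_nhds.1 (tendsto_pi_nhds.1 key i') j') k'

/-- If the matrix of a contraction factors as `U ε = Û ε * Ǔ ε` where `Ǔ ε` tends to
an invertible matrix `Ǔ₀` as `ε → 0⁺`, then `ε ↦ Û ε * Ǔ₀` is a matrix of the same
contraction. -/
theorem contraction_matrix_factor_limit
    (n : ℕ) (c c₀ : Fin n → Fin n → Fin n → ℝ)
    (hanti : ∀ i j k, c i j k = -(c j i k))
    (hjac : ∀ i j k m, ∑ l, (c i j l * c l k m + c k i l * c l j m + c j k l * c l i m) = 0)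
    (Uhat Ucheck : ℝ → Matrix (Fin n) (Fin n) ℝ)
    (Ucheck₀ : Matrix (Fin n) (Fin n) ℝ)
    (hUhatCont : ContinuousOn Uhat (Set.Ioc 0 1))
    (hUcheckCont : ContinuousOn Ucheck (Set.Ioc 0 1))
    (hUhatInv : ∀ ε ∈ Set.Ioc (0 : ℝ) 1, IsUnit (Uhat ε))
    (hUcheckInv : ∀ ε ∈ Set.Ioc (0 : ℝ) 1, IsUnit (Ucheck ε))
    (hUcheckLim : ∀ i j, Tendsto (fun ε : ℝ => Ucheck ε i j) (𝓝[>] (0 : ℝ)) (𝓝 (Ucheck₀ i j)))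
    (hUcheck₀Inv : IsUnit Ucheck₀)
    (hlim : ∀ i' j' k', Tendsto (fun ε : ℝ => transformedSC (Uhat ε * Ucheck ε) c i' j' k')
      (𝓝[>] (0 : ℝ)) (𝓝 (c₀ i' j' k'))) :
    ∀ i' j' k', Tendsto (fun ε : ℝ => transformedSC (Uhat ε * Ucheck₀) c i' j' k')
      (𝓝[>] (0 : ℝ)) (𝓝 (c₀ i' j' k')) :=
  contraction_matrix_factor_limit_general n c c₀ Uhat Ucheck Ucheck₀ hUcheckLim hUcheck₀Inv hlim
end

section
/- Let c : Fin n → Fin n → Fin n → ℝ be the structure constants of an n-dimensional real Lie algebra, let f : Fin n → ℝ → ℝ be such that each f i is continuous on (0,1] and f i ε ≠ 0 for every ε ∈ (0,1], and let c₀ : Fin n → Fin n → Fin n → ℝ be such that for all i, j, k the function ε ↦ c i j k * (f i ε) * (f j ε) / (f k ε) tends to c₀ i j k as ε → 0⁺. Then there exist γ : Fin n → ℝ with γ i ≠ 0 for all i, and β : Fin n → ℤ, such that for all i, j, k the function ε ↦ c i j k * (γ i * γ j / γ k) * ε ^ (β i + β j - β k) (integer power, ε > 0) tends to c₀ i j k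 as ε → 0⁺. -/
/-!
Write `u_i(ε) = log |f_i(ε)|`. Where `c_{ijk} ≠ 0`, the exponent `u_i + u_j - u_k` tends to
`log |c₀_{ijk} / c_{ijk}|` if `c₀_{ijk} ≠ 0` and to `-∞` if `c₀_{ijk} = 0`. Since linear maps between
finite-dimensional spaces have closed range, the finite limits are the exponents of some real
vector `x`; correcting `u(ε)` by a bounded amount into the kernel of the convergent exponents gives a
real `y` whose exponents vanish on the first kind of triple and are positive on the second. These
conditions have integer coefficients, so a ℚ-linear functional `ℝ → ℚ` close to the identity on
the `ℚ`-span of the `y_i` turns `y` into a rational solution, and clearing denominators gives `β`.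
Finally `γ_i = sign (f_i ε₀) · exp x_i` for `ε₀` so small that every convergent scale factor
already has the sign of its limit.
-/

open Filter Topology

variable {α ι : Type*}

-- Rescaling the basis `e_i ↦ x_i e_i` multiplies `c i j k` by `bracketScale x (i, j, k)`;
-- for `x_i = γ_i ε ^ β_i` the power of `ε` is `bracketExponent β (i, j, k)`.
def bracketExponent {G : Type*} [AddCommGroup G] (x : ι → G) (t : ι × ι × ι) : G :=
  x t.1 + x t.2.1 - x t.2.2

def bracketScale {K : Type*} [DivisionRing K] (x : ι → K) (t : ι × ι × ι) : K :=
  x t.1 * x t.2.1 / x t.2.2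

def bracketExponentOn (R : Type*) [CommRing R] (s : Set (ι × ι × ι)) : (ι → R) →ₗ[R] s → R where
  toFun x t := bracketExponent x t
  map_add' x y := by
    ext t
    simp only [bracketExponent, Pi.add_apply]
    abel
  map_smul' r x := by
    ext t
    simp only [bracketExponent, Pi.smul_apply, smul_eq_mul, RingHom.id_apply]
    ring

theorem map_bracketExponent {G H F : Type*} [AddCommGroup G] [AddCommGroup H] [FunLike F G H]
    [AddMonoidHomClass F G H] (φ : F) (x : ι → G) (t : ι × ι × ι) :
    bracketExponent (fun i => φ (x i)) t = φ (bracketExponent x t) := by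
  simp only [bracketExponent, map_add, map_sub]

theorem bracketScale_ne_zero {K : Type*} [DivisionRing K] {x : ι → K} (hx : ∀ i, x i ≠ 0)
    (t : ι × ι × ι) : bracketScale x t ≠ 0 :=
  div_ne_zero (mul_ne_zero (hx _) (hx _)) (hx _)

theorem bracketExponent_log {x : ι → ℝ} (hx : ∀ i, x i ≠ 0) (t : ι × ι × ι) :
    bracketExponent (fun i => Real.log (x i)) t = Real.log (bracketScale x t) := by
  rw [bracketExponent, bracketScale, Real.log_div (mul_ne_zero (hx _) (hx _)) (hx _),
    Real.log_mul (hx _) (hx _)]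

theorem bracketScale_div_abs_mul_exp {a : ι → ℝ} (ha : ∀ i, a i ≠ 0) (x : ι → ℝ)
    (t : ι × ι × ι) :
    bracketScale (fun i => a i / |a i| * Real.exp (x i)) t
      = bracketScale a t / |bracketScale a t| * Real.exp (bracketExponent x t) := by
  have := ha t.2.2
  simp only [bracketScale, bracketExponent, Real.exp_sub, Real.exp_add, abs_mul, abs_div]
  field_simp

theorem div_abs_mul_abs_of_mul_pos {a b : ℝ} (h : 0 < a * b) : a / |a| * |b| = b := by
  rcases mul_pos_iff.1 h with ⟨ha, hb⟩ | ⟨ha, hb⟩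
  · rw [abs_of_pos ha, abs_of_pos hb, div_self ha.ne', one_mul]
  · rw [abs_of_neg ha, abs_of_neg hb, div_neg, div_self ha.ne]
    ring

theorem tendsto_const_mul_zpow_nhdsGT_zero (a : ℝ) {m : ℤ} (hm : 0 < m) :
    Tendsto (fun ε : ℝ => a * ε ^ m) (𝓝[>] 0) (𝓝 0) := by
  have h := ((continuousAt_zpow₀ (0 : ℝ) m (Or.inr hm.le)).tendsto).const_mul a
  rw [zero_zpow m hm.ne', mul_zero] at h
  exact h.mono_left nhdsWithin_le_nhds

theorem LinearMap.mem_range_of_tendsto {𝕜 V W : Type*} [NontriviallyNormedField 𝕜] [CompleteSpace 𝕜]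
    [AddCommGroup V] [Module 𝕜 V] [NormedAddCommGroup W] [NormedSpace 𝕜 W]
    [FiniteDimensional 𝕜 W] {l : Filter α} [l.NeBot] (A : V →ₗ[𝕜] W) {u : α → V} {w : W}
    (h : Tendsto (fun a => A (u a)) l (𝓝 w)) : w ∈ LinearMap.range A :=
  (Submodule.closed_of_finiteDimensional _).mem_of_tendsto h
    (Eventually.of_forall fun a => LinearMap.mem_range_self A (u a))

theorem LinearMap.exists_ker_pos_of_tendsto_atBot {V W κ : Type*} [AddCommGroup V] [Module ℝ V]
    [NormedAddCommGroup W] [NormedSpace ℝ W] [FiniteDimensional ℝ W] [Finite κ]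
    {l : Filter α} [l.NeBot] (A : V →ₗ[ℝ] W) (B : V →ₗ[ℝ] κ → ℝ) {u : α → V} {w : W}
    (hA : Tendsto (fun a => A (u a)) l (𝓝 w)) (hB : ∀ k, Tendsto (fun a => B (u a) k) l atBot) :
    ∃ v, A v = 0 ∧ ∀ k, 0 < B v k := by
  obtain ⟨g, hg⟩ := A.rangeRestrict.exists_rightInverse_of_surjective A.range_rangeRestrict
  have hAg : ∀ v, A (g (A.rangeRestrict v)) = A v := fun v =>
    congrArg Subtype.val (LinearMap.congr_fun hg (A.rangeRestrict v))
  -- `g (A (u a)) - u a` lies in `ker A`, and its `B`-part is `B (u a)` up to a bounded error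
  have hBg : Tendsto (fun a => B (g (A.rangeRestrict (u a)))) l
      (𝓝 (B (g ⟨w, A.mem_range_of_tendsto hA⟩))) :=
    ((B ∘ₗ g).continuous_of_finiteDimensional.tendsto _).comp (tendsto_subtype_rng.2 hA)
  have hpos : ∀ᶠ a in l, ∀ k, 0 < B (g (A.rangeRestrict (u a)) - u a) k := by
    refine eventually_all.2 fun k => ?_
    have hk := (tendsto_pi_nhds.1 hBg k).add_atTop (tendsto_neg_atBot_atTop.comp (hB k))
    filter_upwards [hk.eventually_gt_atTop 0] with a ha
    simpa [sub_eq_add_neg] using ha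
  obtain ⟨a, ha⟩ := hpos.exists
  exact ⟨_, by rw [map_sub, hAg, sub_self], ha⟩

theorem exists_linearMap_rat_mem_of_isOpen [Finite ι] (y : ι → ℝ) {U : Set (ι → ℝ)}
    (hU : IsOpen U) (hy : y ∈ U) : ∃ φ : ℝ →ₗ[ℚ] ℚ, (fun i => (φ (y i) : ℝ)) ∈ U := by
  let V := Submodule.span ℚ (Set.range y)
  have : FiniteDimensional ℚ V := FiniteDimensional.span_of_finite ℚ (Set.finite_range y)
  have hyV : ∀ i, y i ∈ V := fun i => Submodule.subset_span ⟨i, rfl⟩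
  let b := Module.finBasis ℚ V
  -- `F q` lists the values at the `y i` of the functional on `V` taking the values `q` on `b`
  let F : (Fin (Module.finrank ℚ V) → ℝ) → ι → ℝ :=
    fun q i => ∑ m, (b.repr ⟨y i, hyV i⟩ m : ℝ) * q m
  have hF : Continuous F := by fun_prop
  have hFb : F (fun m => (b m : ℝ)) = y := by
    ext i
    have := congrArg Subtype.val (b.sum_repr ⟨y i, hyV i⟩)
    simpa only [Submodule.coe_sum, Submodule.coe_smul, Rat.smul_def] using this
  obtain ⟨q, hq⟩ := (DenseRange.piMap fun _ => Rat.denseRange_cast).exists_mem_open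
    (hU.preimage hF) ⟨_, hFb ▸ hy⟩
  obtain ⟨φ, hφ⟩ := LinearMap.exists_extend (b.constr ℚ q)
  refine ⟨φ, ?_⟩
  rw [Set.mem_preimage] at hq
  convert hq using 1
  ext i
  have := LinearMap.congr_fun hφ ⟨y i, hyV i⟩
  simp only [LinearMap.comp_apply, Submodule.subtype_apply, b.constr_apply_fintype ℚ] at this
  simp [this, F, b.equivFun_apply]

theorem exists_int_eq_nat_mul [Fintype ι] (z : ι → ℚ) :
    ∃ D : ℕ, 0 < D ∧ ∃ β : ι → ℤ, ∀ i, (β i : ℚ) = D * z i := by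
  refine ⟨∏ i, (z i).den, Finset.prod_pos fun i _ => (z i).pos, ?_⟩
  have hint : ∀ i, ∃ b : ℤ, (b : ℚ) = (∏ i, (z i).den : ℕ) * z i := by
    intro i
    obtain ⟨e, he⟩ := Finset.dvd_prod_of_mem (fun i => (z i).den) (Finset.mem_univ i)
    refine ⟨(z i).num * e, ?_⟩
    rw [he, Nat.cast_mul, Int.cast_mul, ← Rat.mul_den_eq_num, Int.cast_natCast]
    ring
  choose β hβ using hint
  exact ⟨β, hβ⟩

theorem exists_int_bracketExponent_of_real [Fintype ι] {E Z : Set (ι × ι × ι)} (y : ι → ℝ)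
    (hyE : ∀ t ∈ E, bracketExponent y t = 0) (hyZ : ∀ t ∈ Z, 0 < bracketExponent y t) :
    ∃ β : ι → ℤ, (∀ t ∈ E, bracketExponent β t = 0) ∧ ∀ t ∈ Z, 0 < bracketExponent β t := by
  have hU : IsOpen {v : ι → ℝ | ∀ t ∈ Z, 0 < bracketExponent v t} := by
    simp only [Set.ofPred_forall]
    exact (Set.toFinite Z).isOpen_biInter fun t _ =>
      isOpen_lt continuous_const (by unfold bracketExponent; fun_prop)
  obtain ⟨φ, hφ⟩ := exists_linearMap_rat_mem_of_isOpen y hU hyZ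
  obtain ⟨D, hD, β, hβ⟩ := exists_int_eq_nat_mul fun i => φ (y i)
  have hβt : ∀ t, ((bracketExponent β t : ℤ) : ℚ) = D * φ (bracketExponent y t) := fun t => by
    rw [← map_bracketExponent φ]
    simp only [bracketExponent, Int.cast_add, Int.cast_sub, hβ]
    ring
  refine ⟨β, fun t ht => ?_, fun t ht => ?_⟩
  · have h := hβt t
    rw [hyE t ht, map_zero, mul_zero] at h
    exact_mod_cast h
  · have hφt : (0 : ℝ) < φ (bracketExponent y t) := by
      simpa only [bracketExponent, map_add, map_sub, Rat.cast_add, Rat.cast_sub]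
        using hφ t ht
    have h := hβt t ▸ mul_pos (Nat.cast_pos.2 hD) (Rat.cast_pos.1 hφt)
    exact_mod_cast h

theorem exists_bracketExponent_eq_and_int_signature [Fintype ι] {l : Filter α} [l.NeBot]
    {E Z : Set (ι × ι × ι)} (u : α → ι → ℝ) (φ : ι × ι × ι → ℝ)
    (hE : ∀ t ∈ E, Tendsto (fun a => bracketExponent (u a) t) l (𝓝 (φ t)))
    (hZ : ∀ t ∈ Z, Tendsto (fun a => bracketExponent (u a) t) l atBot) :
    (∃ x : ι → ℝ, ∀ t ∈ E, bracketExponent x t = φ t) ∧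
      ∃ β : ι → ℤ, (∀ t ∈ E, bracketExponent β t = 0) ∧ ∀ t ∈ Z, 0 < bracketExponent β t := by
  classical
  have hA : Tendsto (fun a => bracketExponentOn ℝ E (u a)) l (𝓝 fun t => φ t) :=
    tendsto_pi_nhds.2 fun t => hE t t.2
  obtain ⟨x, hx⟩ := (bracketExponentOn ℝ E).mem_range_of_tendsto hA
  obtain ⟨y, hyE, hyZ⟩ := (bracketExponentOn ℝ E).exists_ker_pos_of_tendsto_atBot
    (bracketExponentOn ℝ Z) hA fun t => hZ t t.2
  exact ⟨⟨x, fun t ht => congrFun hx ⟨t, ht⟩⟩, exists_int_bracketExponent_of_real y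
    (fun t ht => congrFun hyE ⟨t, ht⟩) fun t ht => hyZ ⟨t, ht⟩⟩

theorem exists_int_signature_of_tendsto_bracketScale [Fintype ι] {l : Filter α} [l.NeBot]
    {g : α → ι → ℝ} (hg : ∀ᶠ a in l, ∀ i, g a i ≠ 0) {S : Set (ι × ι × ι)} {L : ι × ι × ι → ℝ}
    (hlim : ∀ t ∈ S, Tendsto (fun a => bracketScale (g a) t) l (𝓝 (L t))) :
    ∃ γ : ι → ℝ, (∀ i, γ i ≠ 0) ∧ ∃ β : ι → ℤ, ∀ t ∈ S,
      (L t ≠ 0 → bracketScale γ t = L t ∧ bracketExponent β t = 0) ∧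
      (L t = 0 → 0 < bracketExponent β t) := by
  have hlog : ∀ t, (fun a => Real.log (bracketScale (g a) t)) =ᶠ[l]
      fun a => bracketExponent (fun i => Real.log (g a i)) t := fun t =>
    hg.mono fun a ha => (bracketExponent_log ha t).symm
  obtain ⟨⟨x, hx⟩, β, hβE, hβZ⟩ := exists_bracketExponent_eq_and_int_signature
    (E := {t ∈ S | L t ≠ 0}) (Z := {t ∈ S | L t = 0}) (fun a i => Real.log (g a i))
    (fun t => Real.log (L t)) (fun t ht => ((hlim t ht.1).log ht.2).congr' (hlog t))
    fun t ht => (Real.tendsto_log_nhdsNE_zero.comp (tendsto_nhdsWithin_iff.2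
      ⟨ht.2 ▸ hlim t ht.1, hg.mono fun a ha => bracketScale_ne_zero ha t⟩)).congr' (hlog t)
  have hsign : ∀ᶠ a in l, ∀ t ∈ {t ∈ S | L t ≠ 0}, 0 < bracketScale (g a) t * L t :=
    (Set.toFinite _).eventually_all.2 fun t ht =>
      ((hlim t ht.1).mul_const (L t)).eventually (lt_mem_nhds (mul_self_pos.2 ht.2))
  obtain ⟨a, ha, haL⟩ := (hg.and hsign).exists
  refine ⟨fun i => g a i / |g a i| * Real.exp (x i), fun i => ?_, β, fun t ht =>
    ⟨fun hL => ⟨?_, hβE t ⟨ht, hL⟩⟩, fun hL => hβZ t ⟨ht, hL⟩⟩⟩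
  · have := ha i
    positivity
  · rw [bracketScale_div_abs_mul_exp ha, hx t ⟨ht, hL⟩, Real.exp_log_eq_abs hL]
    exact div_abs_mul_abs_of_mul_pos (haL t ⟨ht, hL⟩)

theorem diagonal_contraction_equiv_genIW_integer_general
    (n : ℕ) (c c₀ : Fin n → Fin n → Fin n → ℝ)
    (f : Fin n → ℝ → ℝ)
    (hfne : ∀ i, ∀ ε ∈ Set.Ioc (0 : ℝ) 1, f i ε ≠ 0)
    (hlim : ∀ i j k, Tendsto (fun ε : ℝ => c i j k * f i ε * f j ε / f k ε)
      (𝓝[>] (0 : ℝ)) (𝓝 (c₀ i j k))) :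
    ∃ γ : Fin n → ℝ, (∀ i, γ i ≠ 0) ∧ ∃ β : Fin n → ℤ, ∀ i j k,
      Tendsto (fun ε : ℝ => c i j k * (γ i * γ j / γ k) * ε ^ (β i + β j - β k))
        (𝓝[>] (0 : ℝ)) (𝓝 (c₀ i j k)) := by
  have hf : ∀ᶠ ε in 𝓝[>] (0 : ℝ), ∀ i, f i ε ≠ 0 := by
    filter_upwards [Ioc_mem_nhdsGT one_pos] with ε hε i using hfne i ε hε
  have hscale : ∀ t ∈ {t : Fin n × Fin n × Fin n | c t.1 t.2.1 t.2.2 ≠ 0},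
      Tendsto (fun ε => bracketScale (fun i => f i ε) t) (𝓝[>] 0)
        (𝓝 (c₀ t.1 t.2.1 t.2.2 / c t.1 t.2.1 t.2.2)) := by
    rintro ⟨i, j, k⟩ (hc : c i j k ≠ 0)
    convert (hlim i j k).const_mul (c i j k)⁻¹ using 1
    · ext ε
      simp only [bracketScale]
      field_simp
    · rw [div_eq_inv_mul]
  obtain ⟨γ, hγ, β, hβ⟩ := exists_int_signature_of_tendsto_bracketScale hf hscale
  refine ⟨γ, hγ, β, fun i j k => ?_⟩
  by_cases hc : c i j k = 0
  · have hc₀ : c₀ i j k = 0 := by simpa [hc, eq_comm] using hlim i j k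
    simp [hc, hc₀]
  obtain ⟨hE, hZ⟩ := hβ (i, j, k) hc
  by_cases hc₀ : c₀ i j k = 0
  · rw [hc₀]
    exact tendsto_const_mul_zpow_nhdsGT_zero _ (hZ (by simp [hc₀]))
  · obtain ⟨hγL, hβ0⟩ := hE (div_ne_zero hc₀ hc)
    simp only [bracketScale, bracketExponent] at hγL hβ0
    simp [hγL, hβ0, mul_div_cancel₀ _ hc]

/-- Any diagonal contraction of a real Lie algebra is equivalent to a generalized
Inönü–Wigner contraction with an integer signature: the contracted structure
constants `c₀` obtained via the diagonal matrix `diag(f_1(ε),…,f_n(ε))` are also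
obtained via the matrix `diag(γ_1 ε^{β_1},…,γ_n ε^{β_n})` with integer exponents. -/
theorem diagonal_contraction_equiv_genIW_integer
    (n : ℕ) (c c₀ : Fin n → Fin n → Fin n → ℝ)
    (hanti : ∀ i j k, c i j k = -(c j i k))
    (hjac : ∀ i j k m, ∑ l, (c i j l * c l k m + c k i l * c l j m + c j k l * c l i m) = 0)
    (f : Fin n → ℝ → ℝ)
    (hfcont : ∀ i, ContinuousOn (f i) (Set.Ioc 0 1))
    (hfne : ∀ i, ∀ ε ∈ Set.Ioc (0 : ℝ) 1, f i ε ≠ 0)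
    (hlim : ∀ i j k, Tendsto (fun ε : ℝ => c i j k * f i ε * f j ε / f k ε)
      (𝓝[>] (0 : ℝ)) (𝓝 (c₀ i j k))) :
    ∃ γ : Fin n → ℝ, (∀ i, γ i ≠ 0) ∧ ∃ β : Fin n → ℤ, ∀ i j k,
      Tendsto (fun ε : ℝ => c i j k * (γ i * γ j / γ k) * ε ^ (β i + β j - β k))
        (𝓝[>] (0 : ℝ)) (𝓝 (c₀ i j k)) :=
  diagonal_contraction_equiv_genIW_integer_general n c c₀ f hfne hlim
end

section
/- Let c : Fin n → Fin n → Fin n → ℝ be the structure constants of an n-dimensional real Lie algebra, let f : Fin n → ℝ → ℝ be such that each f i is continuous on (0,1], f i ε ≠ 0 for every ε ∈ (0,1], and each f i tends to a finite limit as ε → 0⁺. Let c₀ : Fin n → Fin n → Fin n → ℝ be such that for all i, j, k the function ε ↦ c i j k * (f i ε) * (f j ε) / (f k ε) tends to c₀ i j k as ε → 0⁺. Then there exist γ : Fin n → ℝ with γ i ≠ 0 for all i, and β : Fin n → ℤ with β i ≥ 0 for all i, such that for all i, j, k the function ε ↦ c i j k * (γ i * γ j / γ k) * ε ^ (β i +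 β j - β k) tends to c₀ i j k as ε → 0⁺. -/
/-!
Write `f ^ v = ∏ i, f i ^ v i` for `v ∈ ℤⁿ`. By hypothesis the monomials `f i` and, where
`c i j k ≠ 0`, `f i * f j / f k` have finite limits `μ`. For `u ε = (log |f i ε|)ᵢ` this says
`⟪v, u ε⟫ → log |μ|` when `μ ≠ 0` and `⟪v, u ε⟫ → -∞` when `μ = 0`. Hence the equations
`⟪v, a⟫ = log |μ|` (`μ ≠ 0`) are solvable, which gives `|γ|`; the signs of `γ` are those of `f`
at one small `ε`. Moreover, projecting `-u ε` onto the solutions of `⟪v, β⟫ = 0` (`μ ≠ 0`)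
gives, for small `ε`, a solution with `⟪v, β⟫ > 0` (`μ = 0`). The system is rational, so it
also has a rational, hence an integer, solution; the monomials `f i` force `β ≥ 0`.
-/

open Filter Topology Matrix

theorem LinearMap.exists_comp_comp_eq_self {K V V' : Type*} [DivisionRing K] [AddCommGroup V]
    [AddCommGroup V'] [Module K V] [Module K V'] (f : V →ₗ[K] V') :
    ∃ g : V' →ₗ[K] V, f ∘ₗ g ∘ₗ f = f := by
  obtain ⟨ρ, hρ⟩ := f.range.subtype.exists_leftInverse_of_injective f.range.ker_subtype
  obtain ⟨σ, hσ⟩ := f.rangeRestrict.exists_rightInverse_of_surjective f.range_rangeRestrict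
  refine ⟨σ ∘ₗ ρ, ?_⟩
  calc f ∘ₗ (σ ∘ₗ ρ) ∘ₗ f
      = f.range.subtype ∘ₗ (f.rangeRestrict ∘ₗ σ) ∘ₗ (ρ ∘ₗ f.range.subtype) ∘ₗ
          f.rangeRestrict := rfl
    _ = f := by rw [hρ, hσ]; rfl

theorem Matrix.exists_mul_mul_eq_self {K m n : Type*} [Field K] [Fintype m] [Fintype n]
    (A : Matrix m n K) : ∃ G : Matrix n m K, A * G * A = A := by
  classical
  obtain ⟨g, hg⟩ := (Matrix.toLin' A).exists_comp_comp_eq_self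
  refine ⟨LinearMap.toMatrix' g, Matrix.toLin'.injective ?_⟩
  rwa [Matrix.toLin'_mul, Matrix.toLin'_mul, Matrix.toLin'_toMatrix', LinearMap.comp_assoc]

theorem Matrix.exists_mulVec_eq_of_tendsto {ι m X : Type*} [Fintype ι] [Fintype m]
    (A : Matrix ι m ℝ) {u : X → m → ℝ} {l : Filter X} [l.NeBot] {α : ι → ℝ}
    (h : Tendsto (fun x => A *ᵥ u x) l (𝓝 α)) : ∃ a, A *ᵥ a = α :=
  (LinearMap.range A.mulVecLin).closed_of_finiteDimensional.mem_of_tendsto h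
    (Eventually.of_forall fun x => ⟨u x, rfl⟩)

theorem Matrix.exists_rat_mulVec_eq_zero_and_pos_of_tendsto {ι κ m X : Type*} [Fintype ι]
    [Fintype κ] [Fintype m] (V : Matrix ι m ℚ) (W : Matrix κ m ℚ)
    {u : X → m → ℝ} {l : Filter X} [l.NeBot] {α : ι → ℝ}
    (hV : Tendsto (fun x => V.map (↑) *ᵥ u x) l (𝓝 α))
    (hW : ∀ s, Tendsto (fun x => (W.map (↑) *ᵥ u x) s) l atBot) :
    ∃ q : m → ℚ, V *ᵥ q = 0 ∧ ∀ s, 0 < (W *ᵥ q) s := by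
  classical
  obtain ⟨G, hG⟩ := V.exists_mul_mul_eq_self
  -- `P` maps into `ker V`, and `P (-u x) = -u x + G (V (u x))` with `G (V (u x))` convergent,
  -- so `W (P (-u x)) → +∞`.
  set P : Matrix m m ℚ := 1 - G * V
  have hVP : V * P = 0 := by rw [Matrix.mul_sub, Matrix.mul_one, ← Matrix.mul_assoc, hG, sub_self]
  let R := Rat.castHom ℝ
  set U : Set (m → ℝ) := {y | ∀ s, 0 < ((W * P).map R *ᵥ y) s}
  have hU : IsOpen U := by
    simp only [U, Set.ofPred_forall]
    exact isOpen_iInter_of_finite fun s => isOpen_lt continuous_const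
      ((continuous_apply s).comp (Continuous.matrix_mulVec continuous_const continuous_id))
  have hWP : ∀ x, (W * P).map R *ᵥ (-u x) =
      -(W.map R *ᵥ u x) + (W * G).map R *ᵥ (V.map R *ᵥ u x) := by
    intro x
    have : (W * P).map R = W.map R - (W * G).map R * V.map R := by
      rw [Matrix.mul_sub, Matrix.mul_one, ← Matrix.mul_assoc, Matrix.map_sub _ (map_sub R),
        Matrix.map_mul]
    rw [this, Matrix.sub_mulVec, Matrix.mulVec_neg, Matrix.mulVec_neg, ← Matrix.mulVec_mulVec]
    abel
  have hUne : ∀ᶠ x in l, -u x ∈ U := by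
    simp only [U, Set.mem_ofPred_eq, eventually_all, hWP]
    intro s
    have hlim : Tendsto (fun x => ((W * G).map R *ᵥ (V.map R *ᵥ u x)) s) l
        (𝓝 (((W * G).map R *ᵥ α) s)) :=
      ((continuous_apply s).comp (Continuous.matrix_mulVec continuous_const
        continuous_id)).continuousAt.tendsto.comp hV
    exact ((tendsto_neg_atBot_atTop.comp (hW s)).atTop_add hlim).eventually_gt_atTop 0
  obtain ⟨q, hq⟩ := (DenseRange.piMap fun _ => Rat.denseRange_cast).exists_mem_open hU
    (let ⟨x, hx⟩ := hUne.exists; ⟨-u x, hx⟩)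
  refine ⟨P *ᵥ q, by rw [mulVec_mulVec, hVP, zero_mulVec], fun s => ?_⟩
  rw [mulVec_mulVec, ← Rat.cast_pos (K := ℝ)]
  exact (RingHom.map_mulVec R (W * P) q s).trans_gt (hq s)

theorem exists_pos_nat_smul_eq_intCast {m : Type*} [Fintype m] (q : m → ℚ) :
    ∃ N : ℕ, 0 < N ∧ ∃ b : m → ℤ, (↑) ∘ b = N • q := by
  refine ⟨∏ i, (q i).den, Finset.prod_pos fun i _ => (q i).pos,
    fun i => (q i).num * ((∏ j, (q j).den) / (q i).den : ℕ), funext fun i => ?_⟩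
  have hdvd := Finset.dvd_prod_of_mem (fun j => (q j).den) (Finset.mem_univ i)
  simp only [Function.comp_apply, Int.cast_mul, Int.cast_natCast, Pi.smul_apply, nsmul_eq_mul,
    Nat.cast_div hdvd (Nat.cast_ne_zero.2 (q i).den_nz), ← Rat.mul_den_eq_num (q i)]
  field_simp

theorem Matrix.exists_int_mulVec_eq_zero_and_pos_of_tendsto {ι κ m X : Type*} [Fintype ι]
    [Fintype κ] [Fintype m] (V : Matrix ι m ℤ) (W : Matrix κ m ℤ)
    {u : X → m → ℝ} {l : Filter X} [l.NeBot] {α : ι → ℝ}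
    (hV : Tendsto (fun x => V.map (↑) *ᵥ u x) l (𝓝 α))
    (hW : ∀ s, Tendsto (fun x => (W.map (↑) *ᵥ u x) s) l atBot) :
    ∃ b : m → ℤ, V *ᵥ b = 0 ∧ ∀ s, 0 < (W *ᵥ b) s := by
  obtain ⟨q, hqV, hqW⟩ := (V.map ((↑) : ℤ → ℚ)).exists_rat_mulVec_eq_zero_and_pos_of_tendsto
    (W.map (↑)) (by simpa [Matrix.map_map, Function.comp_def] using hV)
    (by simpa [Matrix.map_map, Function.comp_def] using hW)
  obtain ⟨N, hN, b, hb⟩ := exists_pos_nat_smul_eq_intCast q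
  have hV' := fun t => RingHom.map_mulVec (Int.castRingHom ℚ) V b t
  have hW' := fun s => RingHom.map_mulVec (Int.castRingHom ℚ) W b s
  simp only [Int.coe_castRingHom, hb, Matrix.mulVec_smul, hqV] at hV' hW'
  refine ⟨b, funext fun t => ?_, fun s => ?_⟩
  · simpa using hV' t
  · exact_mod_cast (hW' s).trans_gt (smul_pos hN (hqW s))

theorem prod_zpow_div_abs_mul_exp {m : Type*} [Fintype m] (y a : m → ℝ) (k : m → ℤ) {μ : ℝ}
    (hpos : 0 < (∏ i, y i ^ k i) * μ) (hlog : ∑ i, k i * a i = Real.log μ) :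
    ∏ i, (y i / |y i| * Real.exp (a i)) ^ k i = μ := by
  have hexp : ∀ i, Real.exp (a i) ^ k i = Real.exp (k i * a i) := fun i => by
    rw [← Real.rpow_intCast, ← Real.exp_mul, mul_comm]
  calc ∏ i, (y i / |y i| * Real.exp (a i)) ^ k i
      = (∏ i, y i ^ k i) / |∏ i, y i ^ k i| * Real.exp (∑ i, k i * a i) := by
        simp only [mul_zpow, div_zpow, Finset.prod_mul_distrib, Finset.prod_div_distrib,
          Finset.abs_prod, abs_zpow, hexp, Real.exp_sum]
    _ = μ := by
        rw [hlog, Real.exp_log_eq_abs (right_ne_zero_of_mul hpos.ne')]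
        rcases mul_pos_iff.1 hpos with ⟨hP, hμ⟩ | ⟨hP, hμ⟩
        · rw [abs_of_pos hP, abs_of_pos hμ, div_self hP.ne', one_mul]
        · rw [abs_of_neg hP, abs_of_neg hμ, div_neg, div_self hP.ne, neg_mul_neg, one_mul]

theorem Real.log_prod_zpow {m : Type*} [Fintype m] {y : m → ℝ} (hy : ∀ i, y i ≠ 0) (k : m → ℤ) :
    Real.log (∏ i, y i ^ k i) = ∑ i, k i * Real.log (y i) := by
  rw [Real.log_prod fun i _ => zpow_ne_zero _ (hy i)]
  simp only [Real.log_zpow]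

theorem exists_prod_zpow_eq_and_exponents_of_tendsto {ι m X : Type*} [Fintype ι] [Fintype m]
    (v : Matrix ι m ℤ) (f : m → X → ℝ) {l : Filter X} [l.NeBot]
    (hf : ∀ᶠ x in l, ∀ i, f i x ≠ 0) (μ : ι → ℝ)
    (hμ : ∀ t, Tendsto (fun x => ∏ i, f i x ^ v t i) l (𝓝 (μ t))) :
    ∃ γ : m → ℝ, (∀ i, γ i ≠ 0) ∧ ∃ b : m → ℤ, ∀ t,
      (μ t ≠ 0 → ∏ i, γ i ^ v t i = μ t ∧ (v *ᵥ b) t = 0) ∧ (μ t = 0 → 0 < (v *ᵥ b) t) := by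
  classical
  -- `Real.log x = Real.log |x|`, so the signs of `f` play no role in `u`.
  set u : X → m → ℝ := fun x i => Real.log (f i x)
  have hlog : ∀ t, (fun x => (v.map (↑) *ᵥ u x) t) =ᶠ[l] fun x => Real.log (∏ i, f i x ^ v t i) :=
    fun t => hf.mono fun x hx => by simp [Real.log_prod_zpow hx, mulVec, dotProduct, u]
  let V := v.submatrix (Subtype.val : {t // μ t ≠ 0} → ι) id
  let W := v.submatrix (Subtype.val : {t // μ t = 0} → ι) id
  have hV : Tendsto (fun x => V.map (↑) *ᵥ u x) l (𝓝 fun t => Real.log (μ t)) :=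
    tendsto_pi_nhds.2 fun t => (((hμ t).log t.2).congr' (hlog t).symm)
  have hW : ∀ t, Tendsto (fun x => (W.map (↑) *ᵥ u x) t) l atBot := fun ⟨t, ht⟩ =>
    (Real.tendsto_log_nhdsNE_zero.comp (tendsto_nhdsWithin_iff.2 ⟨ht ▸ hμ t,
      hf.mono fun x hx => Finset.prod_ne_zero_iff.2 fun i _ => zpow_ne_zero _ (hx i)⟩)).congr'
      (hlog t).symm
  obtain ⟨a, ha⟩ := (V.map ((↑) : ℤ → ℝ)).exists_mulVec_eq_of_tendsto hV
  obtain ⟨b, hbV, hbW⟩ := V.exists_int_mulVec_eq_zero_and_pos_of_tendsto W hV hW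
  have hsign : ∀ᶠ x in l, ∀ t : {t // μ t ≠ 0}, 0 < (∏ i, f i x ^ v t i) * μ t :=
    eventually_all.2 fun t => ((hμ t).mul_const (μ t)).eventually_const_lt (mul_self_pos.2 t.2)
  obtain ⟨x, hx, hxs⟩ := (hf.and hsign).exists
  refine ⟨fun i => f i x / |f i x| * Real.exp (a i), fun i => ?_, b, fun t =>
    ⟨fun ht => ⟨prod_zpow_div_abs_mul_exp _ _ _ (hxs ⟨t, ht⟩) ?_, congr_fun hbV ⟨t, ht⟩⟩,
      fun ht => hbW ⟨t, ht⟩⟩⟩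
  · exact mul_ne_zero (div_ne_zero (hx i) (abs_ne_zero.2 (hx i))) (Real.exp_ne_zero _)
  · simpa [mulVec, dotProduct, V] using congr_fun ha ⟨t, ht⟩

section ContractionExponents

variable {m : Type*} [DecidableEq m]

theorem prod_zpow_single {G₀ : Type*} [CommGroupWithZero G₀] [Fintype m] (x : m → G₀) (i : m) :
    ∏ l, x l ^ (Pi.single i 1 : m → ℤ) l = x i := by
  rw [Finset.prod_eq_single i (fun l _ hl => by simp [hl]) (by simp)]
  simp

theorem prod_zpow_single_add_single_sub_single {G₀ : Type*} [CommGroupWithZero G₀] [Fintype m]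
    {x : m → G₀} (hx : ∀ l, x l ≠ 0) (i j k : m) :
    ∏ l, x l ^ (Pi.single i 1 + Pi.single j 1 - Pi.single k 1 : m → ℤ) l = x i * x j / x k := by
  simp only [Pi.add_apply, Pi.sub_apply, zpow_sub₀ (hx _), zpow_add₀ (hx _),
    Finset.prod_div_distrib, Finset.prod_mul_distrib, prod_zpow_single]

/-- The exponent vectors of the monomials `f i` and `f i * f j / f k`. -/
def contractionExponents (S : Set (m × m × m)) : Matrix (m ⊕ S) m ℤ :=
  Matrix.of <| Sum.elim (fun i => Pi.single i 1)
    fun t => Pi.single t.1.1 1 + Pi.single t.1.2.1 1 - Pi.single t.1.2.2 1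

variable (S : Set (m × m × m))

theorem contractionExponents_inl (i : m) : contractionExponents S (.inl i) = Pi.single i 1 :=
  rfl

theorem contractionExponents_inr (t : S) : contractionExponents S (.inr t) =
    Pi.single t.1.1 1 + Pi.single t.1.2.1 1 - Pi.single t.1.2.2 1 :=
  rfl

theorem contractionExponents_mulVec_inl [Fintype m] (b : m → ℤ) (i : m) :
    (contractionExponents S *ᵥ b) (.inl i) = b i :=
  single_one_dotProduct i b

theorem contractionExponents_mulVec_inr [Fintype m] (b : m → ℤ) (t : S) :
    (contractionExponents S *ᵥ b) (.inr t) = b t.1.1 + b t.1.2.1 - b t.1.2.2 := by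
  simp only [mulVec, contractionExponents_inr, sub_dotProduct, add_dotProduct,
    single_one_dotProduct]

end ContractionExponents

theorem tendsto_const_mul_zpow_nhds_zero (C : ℝ) {p : ℤ} (hp : 0 < p) :
    Tendsto (fun ε : ℝ => C * ε ^ p) (𝓝 0) (𝓝 0) := by
  simpa [_root_.zero_zpow _ hp.ne'] using
    ((continuousAt_zpow₀ (0 : ℝ) p (.inr hp.le)).tendsto.const_mul C)

theorem diagonal_contraction_finite_limit_equiv_genIW_nonneg_general
    (n : ℕ) (c c₀ : Fin n → Fin n → Fin n → ℝ)
    (f : Fin n → ℝ → ℝ)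
    (hfne : ∀ i, ∀ ε ∈ Set.Ioc (0 : ℝ) 1, f i ε ≠ 0)
    (hffin : ∀ i, ∃ L : ℝ, Tendsto (f i) (𝓝[>] (0 : ℝ)) (𝓝 L))
    (hlim : ∀ i j k, Tendsto (fun ε : ℝ => c i j k * f i ε * f j ε / f k ε)
      (𝓝[>] (0 : ℝ)) (𝓝 (c₀ i j k))) :
    ∃ γ : Fin n → ℝ, (∀ i, γ i ≠ 0) ∧ ∃ β : Fin n → ℤ, (∀ i, 0 ≤ β i) ∧ ∀ i j k,
      Tendsto (fun ε : ℝ => c i j k * (γ i * γ j / γ k) * ε ^ (β i + β j - β k))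
        (𝓝[>] (0 : ℝ)) (𝓝 (c₀ i j k)) := by
  choose L hL using hffin
  have hf : ∀ᶠ ε in 𝓝[>] (0 : ℝ), ∀ i, f i ε ≠ 0 := by
    filter_upwards [Ioc_mem_nhdsGT zero_lt_one] with ε hε i using hfne i ε hε
  have hc₀ : ∀ i j k, c i j k = 0 → c₀ i j k = 0 := fun i j k hc =>
    tendsto_nhds_unique (hlim i j k) (by simp [hc])
  let S : Set (Fin n × Fin n × Fin n) := {t | c t.1 t.2.1 t.2.2 ≠ 0}
  let μ : Fin n ⊕ S → ℝ := Sum.elim L fun t => c₀ t.1.1 t.1.2.1 t.1.2.2 / c t.1.1 t.1.2.1 t.1.2.2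
  have hμ : ∀ t, Tendsto (fun ε => ∏ l, f l ε ^ contractionExponents S t l) (𝓝[>] 0) (𝓝 (μ t))
    | .inl i => by
        simpa only [μ, Sum.elim_inl, contractionExponents_inl, prod_zpow_single] using hL i
    | .inr ⟨(i, j, k), hc⟩ => ((hlim i j k).div_const (c i j k)).congr' <| hf.mono fun ε hε => by
        simp only [contractionExponents_inr, prod_zpow_single_add_single_sub_single hε]
        field_simp [show c i j k ≠ 0 from hc]
  obtain ⟨γ, hγ, β, hβ⟩ := exists_prod_zpow_eq_and_exponents_of_tendsto _ f hf μ hμ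
  refine ⟨γ, hγ, β, fun i => ?_, fun i j k => ?_⟩
  · have := hβ (.inl i)
    simp only [μ, Sum.elim_inl, contractionExponents_mulVec_inl] at this
    rcases eq_or_ne (L i) 0 with h | h
    exacts [(this.2 h).le, (this.1 h).2.ge]
  rcases eq_or_ne (c i j k) 0 with hc | hc
  · simp [hc, hc₀ i j k hc]
  obtain ⟨hβ₁, hβ₀⟩ := hβ (.inr ⟨(i, j, k), hc⟩)
  simp only [μ, Sum.elim_inr, contractionExponents_inr, contractionExponents_mulVec_inr,
    prod_zpow_single_add_single_sub_single hγ, div_ne_zero_iff, div_eq_zero_iff, hc,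
    or_false] at hβ₁ hβ₀
  rcases eq_or_ne (c₀ i j k) 0 with h | h
  · rw [h]
    exact (tendsto_const_mul_zpow_nhds_zero _ (hβ₀ h)).mono_left nhdsWithin_le_nhds
  · obtain ⟨hγ', hβ'⟩ := hβ₁ ⟨h, hc⟩
    simp [hγ', hβ', mul_div_cancel₀ _ hc]

/-- Any diagonal contraction whose matrix possesses a finite limit at `ε → 0⁺`
is equivalent to a generalized Inönü–Wigner contraction with nonnegative integer
exponents. -/
theorem diagonal_contraction_finite_limit_equiv_genIW_nonneg
    (n : ℕ) (c c₀ : Fin n → Fin n → Fin n → ℝ)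
    (hanti : ∀ i j k, c i j k = -(c j i k))
    (hjac : ∀ i j k m, ∑ l, (c i j l * c l k m + c k i l * c l j m + c j k l * c l i m) = 0)
    (f : Fin n → ℝ → ℝ)
    (hfcont : ∀ i, ContinuousOn (f i) (Set.Ioc 0 1))
    (hfne : ∀ i, ∀ ε ∈ Set.Ioc (0 : ℝ) 1, f i ε ≠ 0)
    (hffin : ∀ i, ∃ L : ℝ, Tendsto (f i) (𝓝[>] (0 : ℝ)) (𝓝 L))
    (hlim : ∀ i j k, Tendsto (fun ε : ℝ => c i j k * f i ε * f j ε / f k ε)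
      (𝓝[>] (0 : ℝ)) (𝓝 (c₀ i j k))) :
    ∃ γ : Fin n → ℝ, (∀ i, γ i ≠ 0) ∧ ∃ β : Fin n → ℤ, (∀ i, 0 ≤ β i) ∧ ∀ i j k,
      Tendsto (fun ε : ℝ => c i j k * (γ i * γ j / γ k) * ε ^ (β i + β j - β k))
        (𝓝[>] (0 : ℝ)) (𝓝 (c₀ i j k)) :=
  diagonal_contraction_finite_limit_equiv_genIW_nonneg_general n c c₀ f hfne hffin hlim
end

section
/- Let a_1, …, a_m be finitely many vectors in ℤ^n. If the system of strict homogeneous linear inequalities ⟨a_s, x⟩ > 0 for s = 1, …, m has no solution x ∈ ℝ^n, then there exist natural numbers λ_1, …, λ_m, not all zero, such that ∑_{s=1}^m λ_s • a_s = 0. -/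
/-!
Hahn–Banach separation turns the infeasibility of the strict system into `0 ∈ convexHull ℝ {a_s}`
(Gordan's alternative). By Carathéodory, `0` is then a convex combination with positive weights
`w` of an affinely independent subfamily. That subfamily is linearly dependent over `ℝ`, hence
over `ℤ`; and affine independence makes every real linear relation among its members a multiple
of `w`. So an integer relation `c` is proportional to `w`, and `(∑ c) • c` has positive entries.
-/

open Finset Function Set

theorem zero_mem_convexHull_of_not_exists_dotProduct_pos {ι κ : Type*} [Finite ι] [Fintype κ]
    (v : ι → κ → ℝ) (h : ¬∃ x : κ → ℝ, ∀ i, 0 < v i ⬝ᵥ x) :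
    (0 : κ → ℝ) ∈ convexHull ℝ (range v) := by
  classical
  by_contra h₀
  obtain ⟨f, u, hfu, hu⟩ := geometric_hahn_banach_closed_point (convex_convexHull ℝ _)
    ((finite_range v).isClosed_convexHull ℝ) h₀
  have hf (y : κ → ℝ) : f y = y ⬝ᵥ fun k ↦ f (Pi.single k 1) := by
    have := LinearEquiv.piRing_symm_apply ℝ (LinearEquiv.piRing ℝ ℝ κ ℝ (f : (κ → ℝ) →ₗ[ℝ] ℝ)) y
    rw [LinearEquiv.symm_apply_apply] at this
    simpa [dotProduct] using this
  refine h ⟨-fun k ↦ f (Pi.single k 1), fun i ↦ ?_⟩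
  have hfv := hfu (v i) (subset_convexHull ℝ _ (mem_range_self i))
  rw [map_zero] at hu
  rw [dotProduct_neg, ← hf]
  linarith

theorem AffineIndependent.exists_relation_algebraMap_eq_mul {R S ι κ : Type*} [CommRing R]
    [CommRing S] [IsDomain S] [Algebra R S] [FaithfulSMul R S] [Fintype ι] [Finite κ]
    {v : ι → κ → R} (hv : AffineIndependent S fun i ↦ algebraMap R S ∘ v i) {w : ι → S}
    (hw₁ : ∑ i, w i = 1) (hwv : ∑ i, w i • (algebraMap R S ∘ v i) = 0) :
    ∃ c : ι → R, ∑ i, c i • v i = 0 ∧ ∑ i, c i ≠ 0 ∧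
      ∀ i, algebraMap R S (c i) = algebraMap R S (∑ j, c j) * w i := by
  have hdep_S : ¬LinearIndependent S fun i ↦ algebraMap R S ∘ v i := by
    refine Fintype.not_linearIndependent_iff.2 ⟨w, hwv, ?_⟩
    by_contra! hw
    simp [hw] at hw₁
  have hdep_R : ¬LinearIndependent R v := mt linearIndependent_algebraMap_comp_iff.2 hdep_S
  obtain ⟨c, hcv, i₀, hc⟩ := Fintype.not_linearIndependent_iff.1 hdep_R
  have hcv_S : ∑ i, algebraMap R S (c i) • (algebraMap R S ∘ v i) = 0 := by
    ext k
    simpa [Algebra.smul_def] using congr(algebraMap R S ($hcv k))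
  have hcw : ∀ i, algebraMap R S (c i) = algebraMap R S (∑ j, c j) * w i := by
    refine fun i ↦ hv.eq_of_sum_eq_sum (s := univ) (w₁ := fun i ↦ algebraMap R S (c i))
      (w₂ := fun i ↦ algebraMap R S (∑ j, c j) * w i) ?_ ?_ i (mem_univ i)
    · simp [← mul_sum, hw₁]
    · simp only [hcv_S, mul_smul, ← smul_sum, hwv, smul_zero]
  refine ⟨c, hcv, fun hsum ↦ hc ?_, hcw⟩
  apply FaithfulSMul.algebraMap_injective R S
  simp [hcw i₀, hsum]

theorem AffineIndependent.exists_pos_nat_relation {ι κ : Type*} [Fintype ι] [Finite κ]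
    {a : ι → κ → ℤ} (ha : AffineIndependent ℝ fun i k ↦ (a i k : ℝ)) {w : ι → ℝ}
    (hw₀ : ∀ i, 0 < w i) (hw₁ : ∑ i, w i = 1) (hwa : ∑ i, w i • (fun k ↦ (a i k : ℝ)) = 0) :
    ∃ lam : ι → ℕ, (∀ i, 0 < lam i) ∧ ∑ i, lam i • a i = 0 := by
  have hcast (i : ι) : (fun k ↦ (a i k : ℝ)) = algebraMap ℤ ℝ ∘ a i := by ext; simp
  rw [funext hcast] at ha
  simp only [hcast] at hwa
  obtain ⟨c, hca, hc, hcw⟩ := ha.exists_relation_algebraMap_eq_mul hw₁ hwa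
  set N := ∑ j, c j
  have hpos (i : ι) : 0 < N * c i := by
    have hci : (c i : ℝ) = N * w i := by simpa using hcw i
    have hN : (N : ℝ) ≠ 0 := by exact_mod_cast hc
    have : (0 : ℝ) < N * c i := by
      rw [hci, ← mul_assoc]
      exact mul_pos (mul_self_pos.2 hN) (hw₀ i)
    exact_mod_cast this
  refine ⟨fun i ↦ (N * c i).toNat, fun i ↦ by simpa using hpos i, ?_⟩
  calc ∑ i, (N * c i).toNat • a i = ∑ i, (N * c i) • a i := by
        refine sum_congr rfl fun i _ ↦ ?_
        rw [← natCast_zsmul, Int.toNat_of_nonneg (hpos i).le]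
    _ = 0 := by simp only [mul_smul, ← smul_sum, hca, smul_zero]

theorem exists_nat_relation_of_zero_mem_convexHull {ι κ : Type*} [Fintype ι] [Finite κ]
    (a : ι → κ → ℤ) (h : (0 : κ → ℝ) ∈ convexHull ℝ (range fun i k ↦ (a i k : ℝ))) :
    ∃ lam : ι → ℕ, (∃ i, lam i ≠ 0) ∧ ∑ i, lam i • a i = 0 := by
  classical
  obtain ⟨ι', _, z, w, hz, hz_ind, hw₀, hw₁, hwz⟩ := eq_pos_convex_span_of_mem_convexHull h
  choose σ hσ using fun j ↦ hz (mem_range_self j)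
  obtain rfl : (fun j k ↦ (a (σ j) k : ℝ)) = z := funext hσ
  obtain ⟨lam, hlam₀, hlam⟩ :=
    AffineIndependent.exists_pos_nat_relation (a := a ∘ σ) hz_ind hw₀ hw₁ hwz
  obtain ⟨j₀⟩ : Nonempty ι' := by
    by_contra! hι'
    simp at hw₁
  refine ⟨fun i ↦ ∑ j : {j // σ j = i}, lam j, ⟨σ j₀, fun h₀ ↦ ?_⟩, ?_⟩
  · exact (hlam₀ j₀).ne' (sum_eq_zero_iff.1 h₀ ⟨j₀, rfl⟩ (mem_univ _))
  · calc ∑ i, (∑ j : {j // σ j = i}, lam j) • a i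
        = ∑ i, ∑ j : {j // σ j = i}, lam j • a (σ j) := by
          simp_rw [sum_smul]
          exact sum_congr rfl fun i _ ↦ sum_congr rfl fun j _ ↦ by rw [j.2]
      _ = ∑ j, lam j • a (σ j) := Fintype.sum_fiberwise σ fun j ↦ lam j • a (σ j)
      _ = 0 := hlam

/-- Voronoy-type theorem for strict homogeneous linear inequalities with integer
coefficients: if the system `⟨a_s, x⟩ > 0`, `s = 1, …, m`, has no real solution,
then some nontrivial linear combination of the `a_s` with natural coefficients
vanishes identically. -/
theorem voronoy_strict_homogeneous_integer
    (n m : ℕ) (a : Fin m → Fin n → ℤ)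
    (h : ¬ ∃ x : Fin n → ℝ, ∀ s : Fin m, 0 < ∑ i, (a s i : ℝ) * x i) :
    ∃ lam : Fin m → ℕ, (∃ s, lam s ≠ 0) ∧ ∑ s, lam s • a s = (0 : Fin n → ℤ) :=
  exists_nat_relation_of_zero_mem_convexHull a
    (zero_mem_convexHull_of_not_exists_dotProduct_pos _ h)
end
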